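/- arXiv:2010.05610 — 7 statements merged into one kernel-verified Lean document; each statement's English description precedes it below -/
import Mathlib

section
/- For every natural number n, the 1/2-binomial coefficient satisfies [(2n) 1] = 2^(2n+1)/(π · C(2n, n)), where C(2n, n) is the central binomial coefficient. -/
open scoped Real Classical

/-- The generalized β-binomial coefficient `[n k]_β`:
`Γ(βn+1)/(Γ(βk+1)·Γ(β(n−k)+1))` when `β(n−k)` is not an integer `≤ -1`, else `0`. -/
noncomputable def bbinom (β : ℝ) (n : ℕ) (k : ℤ) : ℝ :=
  if ∃ m : ℤ, m ≤ -1 ∧ β * ((n : ℝ) - (k : ℝ)) = (m : ℝ) then 0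
  else Real.Gamma (β * n + 1) /
    (Real.Gamma (β * k + 1) * Real.Gamma (β * ((n : ℝ) - (k : ℝ)) + 1))

/-- The 1/2-binomial coefficient. -/
noncomputable def bhalf (n : ℕ) (k : ℤ) : ℝ := bbinom (1/2) n k

/-! For `k = 1` the coefficient is `Γ(n+1) / (Γ(3/2) Γ(n+1/2))`. The half-integer values
`Γ(3/2) = √π/2` and `Γ(n+1/2) = (2n-1)‼ √π / 2^n` produce the factor `π`, and
`C(2n, n) · n! = 2^n (2n-1)‼` turns the double factorial into the central binomial coefficient. -/

open Nat

-- At `n = 0` the truncated `2 * n - 1 = 0` is harmless since `0‼ = 1`.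
theorem Nat.factorial_two_mul_eq_mul_doubleFactorial (n : ℕ) :
    (2 * n)! = (2 * n)‼ * (2 * n - 1)‼ := by
  cases n with
  | zero => rfl
  | succ n => simpa [mul_add] using factorial_eq_mul_doubleFactorial (2 * n + 1)

theorem Nat.choose_two_mul_self_mul_factorial (n : ℕ) :
    (2 * n).choose n * n ! = 2 ^ n * (2 * n - 1)‼ := by
  refine Nat.eq_of_mul_eq_mul_right (factorial_pos n) ?_
  have h := choose_mul_factorial_mul_factorial (n.le_add_right n)
  rw [Nat.add_sub_cancel_left, ← two_mul] at h
  rw [h, factorial_two_mul_eq_mul_doubleFactorial, doubleFactorial_two_mul]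
  ring

theorem Real.Gamma_three_div_two : Real.Gamma (3 / 2) = √π / 2 := by
  rw [show (3 / 2 : ℝ) = 1 / 2 + 1 by norm_num, Real.Gamma_add_one (by norm_num),
    Real.Gamma_one_half_eq, mul_comm, one_div, div_eq_mul_inv]

theorem bbinom_of_neg_one_lt {β : ℝ} {n : ℕ} {k : ℤ} (h : -1 < β * (n - k)) :
    bbinom β n k =
      Real.Gamma (β * n + 1) / (Real.Gamma (β * k + 1) * Real.Gamma (β * (n - k) + 1)) := by
  refine if_neg ?_
  rintro ⟨m, hm, hβ⟩
  have : (m : ℝ) ≤ -1 := by exact_mod_cast hm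
  linarith

theorem bhalf_even_one (n : ℕ) :
    bhalf (2 * n) 1 = 2 ^ (2 * n + 1) / (π * (Nat.choose (2 * n) n : ℝ)) := by
  have hnum : (1 / 2 : ℝ) * (2 * n : ℕ) + 1 = n + 1 := by push_cast; ring
  have hden : (1 / 2 : ℝ) * (((2 * n : ℕ) : ℝ) - (1 : ℤ)) + 1 = n + 1 / 2 := by push_cast; ring
  rw [bhalf, bbinom_of_neg_one_lt (by push_cast; linarith [n.cast_nonneg (α := ℝ)]), hnum, hden,
    show (1 / 2 : ℝ) * (1 : ℤ) + 1 = 3 / 2 by norm_num, Real.Gamma_nat_eq_factorial,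
    Real.Gamma_three_div_two, Real.Gamma_nat_add_half]
  have hchoose : ((2 * n).choose n : ℝ) * n ! = 2 ^ n * (2 * n - 1 : ℕ)‼ := by
    exact_mod_cast choose_two_mul_self_mul_factorial n
  have hchoose_ne : ((2 * n).choose n : ℝ) ≠ 0 := mod_cast (choose_pos (by omega)).ne'
  field_simp
  rw [Real.sq_sqrt Real.pi_pos.le]
  linear_combination (2 * 2 ^ n * π) * hchoose
end

section
/- For every natural number n, the 1/2-binomial coefficient satisfies [(2n+1) 1] = (2n+1)·C(2n, n)/2^(2n), where C(2n, n) is the central binomial coefficient. -/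
open scoped Real Classical


lemma gamma_nat_add_half (n : ℕ) :
    Real.Gamma ((n : ℝ) + 1/2) = (Nat.factorial (2*n) : ℝ) * Real.sqrt Real.pi /
      (4 ^ n * Nat.factorial n) := by
  induction n with
  | zero => norm_num [Real.Gamma_one_half_eq]
  | succ n ih =>
      have h : ((n : ℝ) + 1) + 1/2 = ((n : ℝ) + 1/2) + 1 := by ring
      push_cast
      rw [h, Real.Gamma_add_one (by positivity), ih]
      have h2 : (2 * (n+1)) = (2*n + 1) + 1 := by ring
      rw [h2]
      push_cast [Nat.factorial_succ]
      have h4 : (4:ℝ)^n ≠ 0 := by positivity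
      have hf : (Nat.factorial n : ℝ) ≠ 0 := Nat.cast_ne_zero.2 (Nat.factorial_ne_zero n)
      field_simp
      ring

theorem bhalf_odd_one (n : ℕ) :
    bhalf (2 * n + 1) 1 = (2 * (n : ℝ) + 1) * (Nat.choose (2 * n) n : ℝ) / 2 ^ (2 * n) := by
  rw [bhalf, bbinom]
  rw [if_neg]
  · have h1 : (1:ℝ)/2 * ((2*n+1 : ℕ) : ℝ) + 1 = ((n+1 : ℕ) : ℝ) + 1/2 := by push_cast; ring
    have h2 : (1:ℝ)/2 * (((2*n+1 : ℕ) : ℝ) - ((1:ℤ) : ℝ)) + 1 = (n : ℝ) + 1 := by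
      push_cast; ring
    have h3 : (1:ℝ)/2 * ((1:ℤ) : ℝ) + 1 = 1/2 + 1 := by norm_num
    rw [h1, h2, h3, gamma_nat_add_half, Real.Gamma_add_one (by norm_num),
      Real.Gamma_one_half_eq, Real.Gamma_nat_eq_factorial]
    have hc : (Nat.choose (2*n) n : ℝ) = (Nat.factorial (2*n) : ℝ) /
        (Nat.factorial n * Nat.factorial n) := by
      rw [eq_div_iff (by positivity)]
      rw [← Nat.cast_mul, ← Nat.cast_mul]
      norm_cast
      have h := Nat.choose_mul_factorial_mul_factorial (show n ≤ 2*n by omega)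
      have h2 : 2*n - n = n := by omega
      rw [h2] at h
      rw [← h]; ring
    rw [hc]
    have hfac : (Nat.factorial (2*(n+1)) : ℝ) = (2*n+2)*(2*n+1)*Nat.factorial (2*n) := by
      have : 2*(n+1) = (2*n+1)+1 := by ring
      rw [this, Nat.factorial_succ, Nat.factorial_succ]
      push_cast; ring
    rw [hfac]
    have hsucc : (Nat.factorial (n+1) : ℝ) = ((n:ℝ)+1)*Nat.factorial n := by
      rw [Nat.factorial_succ]; push_cast; ring
    rw [hsucc]
    have hpi : Real.sqrt Real.pi ≠ 0 := by positivity
    have hf : (Nat.factorial n : ℝ) ≠ 0 := Nat.cast_ne_zero.2 (Nat.factorial_ne_zero n)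
    have hf2 : (Nat.factorial (2*n) : ℝ) ≠ 0 := Nat.cast_ne_zero.2 (Nat.factorial_ne_zero _)
    have h4 : (4:ℝ)^n = 2^(2*n) := by rw [pow_mul]; norm_num
    rw [pow_succ, h4]
    field_simp
    ring
  · rintro ⟨m, hm, h⟩
    have : (1:ℝ)/2 * (((2*n+1 : ℕ) : ℝ) - ((1:ℤ) : ℝ)) = (n : ℝ) := by push_cast; ring
    rw [this] at h
    have : (m : ℝ) ≥ 0 := h ▸ Nat.cast_nonneg n
    have : (0:ℤ) ≤ m := by exact_mod_cast this
    omega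
end

section
/- Committee/Chair identity: for every natural number n and every integer k ≥ −1, the 1/2-binomial coefficient satisfies [(n+2) (k+2)] = ((n+2)/(k+2)) · [n k]. -/
open scoped Real Classical

theorem bhalf_committee_chair (n : ℕ) (k : ℤ) (hk : -1 ≤ k) :
    bhalf (n + 2) (k + 2) = (((n : ℝ) + 2) / ((k : ℝ) + 2)) * bhalf n k := by
  have hkR : (-1:ℝ) ≤ (k:ℝ) := by exact_mod_cast hk
  have hk2 : ((1/2:ℝ)*(k:ℝ) + 1) ≠ 0 := by nlinarith
  have hn2 : ((1/2:ℝ)*(n:ℝ) + 1) ≠ 0 := by positivity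
  unfold bhalf bbinom
  have hcond : (∃ m : ℤ, m ≤ -1 ∧ (1/2:ℝ) * ((↑(n+2):ℝ) - (↑(k+2):ℝ)) = m) ↔
      (∃ m : ℤ, m ≤ -1 ∧ (1/2:ℝ) * ((n:ℝ) - (k:ℝ)) = m) := by
    constructor <;> rintro ⟨m, hm, h⟩ <;> exact ⟨m, hm, by push_cast at h ⊢; linarith⟩
  by_cases h : ∃ m : ℤ, m ≤ -1 ∧ (1/2:ℝ) * ((n:ℝ) - (k:ℝ)) = m
  · rw [if_pos (hcond.mpr h), if_pos h]; ring
  · rw [if_neg (fun h' => h (hcond.mp h')), if_neg h]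
    have e1 : (1/2:ℝ) * ((↑(n+2):ℕ):ℝ) + 1 = ((1/2:ℝ)*(n:ℝ) + 1) + 1 := by push_cast; ring
    have e2 : (1/2:ℝ) * ((↑(k+2):ℤ):ℝ) + 1 = ((1/2:ℝ)*(k:ℝ) + 1) + 1 := by push_cast; ring
    have e3 : (1/2:ℝ) * (((↑(n+2):ℕ):ℝ) - ((↑(k+2):ℤ):ℝ)) = (1/2:ℝ)*((n:ℝ)-(k:ℝ)) := by
      push_cast; ring
    rw [e1, e2, e3, Real.Gamma_add_one hn2, Real.Gamma_add_one hk2]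
    have hq : ((n:ℝ) + 2) / ((k:ℝ) + 2) = ((1/2:ℝ)*(n:ℝ)+1) / ((1/2:ℝ)*(k:ℝ)+1) := by
      rw [div_eq_div_iff (by nlinarith) hk2]; ring
    rw [hq, div_mul_div_comm, mul_assoc]
end

section
/- Difference formula: for every natural number n and every integer k ≥ −1, the 1/2-binomial coefficient satisfies [n (k+2)] − [n k] = ((n−2−2k)/(n+2)) · [(n+2) (k+2)]. -/
open scoped Real Classical

/-!
Mathlib's `Real.Gamma` vanishes at the poles `0, -1, -2, …`, so `(Γ s)⁻¹` is the entire
reciprocal Gamma function and the case distinction in `bbinom` is redundant: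
`[n k]_β = Γ(x+1)/(Γ(a+1)Γ(x-a+1))` with `x = βn`, `a = βk`. For `β = 1/2`, shifting `k` by `2`
shifts `a` by `1`, and the recurrence `1/Γ(s) = s/Γ(s+1)`, which holds for every real `s`, turns
the difference into a single ratio of Gamma values with no exceptional cases.
-/

namespace Real

theorem one_div_Gamma_eq_self_mul_one_div_Gamma_add_one (s : ℝ) :
    (Gamma s)⁻¹ = s * (Gamma (s + 1))⁻¹ := by
  rcases ne_or_eq s 0 with hs | rfl
  · rw [Gamma_add_one hs, mul_inv, mul_inv_cancel_left₀ hs]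
  · rw [zero_add, Gamma_zero, inv_zero, zero_mul]

end Real

noncomputable def gammaBinom (x a : ℝ) : ℝ :=
  Real.Gamma (x + 1) / (Real.Gamma (a + 1) * Real.Gamma (x - a + 1))

theorem gammaBinom_add_one_sub (x a : ℝ) (hx : 0 < x + 1) :
    gammaBinom x (a + 1) - gammaBinom x a =
      (x - 2 * a - 1) / (x + 1) * gammaBinom (x + 1) (a + 1) := by
  have hΓx : Real.Gamma (x + 1 + 1) = (x + 1) * Real.Gamma (x + 1) := Real.Gamma_add_one hx.ne'
  have hΓa := Real.one_div_Gamma_eq_self_mul_one_div_Gamma_add_one (a + 1)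
  have hΓb := Real.one_div_Gamma_eq_self_mul_one_div_Gamma_add_one (x - a)
  simp only [gammaBinom, show x - (a + 1) + 1 = x - a by ring,
    show x + 1 - (a + 1) + 1 = x - a + 1 by ring, div_eq_mul_inv, mul_inv, hΓx, hΓa, hΓb]
  field_simp
  ring

theorem bbinom_eq_gammaBinom (β : ℝ) (n : ℕ) (k : ℤ) :
    bbinom β n k = gammaBinom (β * n) (β * k) := by
  rw [bbinom, gammaBinom, ← mul_sub, ite_eq_right_iff]
  rintro ⟨m, hm, hβ⟩
  obtain ⟨j, hj⟩ : ∃ j : ℕ, m + 1 = -(j : ℤ) := ⟨(-(m + 1)).toNat, by omega⟩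
  have hpole : β * ((n : ℝ) - k) + 1 = -(j : ℝ) := by
    rw [hβ]; exact_mod_cast hj
  rw [hpole, Real.Gamma_neg_nat_eq_zero, mul_zero, div_zero]

theorem bhalf_difference_general (n : ℕ) (k : ℤ) :
    bhalf n (k + 2) - bhalf n k =
      (((n : ℝ) - 2 - 2 * (k : ℝ)) / ((n : ℝ) + 2)) * bhalf (n + 2) (k + 2) := by
  have key := gammaBinom_add_one_sub (1 / 2 * n) (1 / 2 * k) (by positivity)
  have hcoef : (1 / 2 * n - 2 * (1 / 2 * k) - 1) / (1 / 2 * n + 1) =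
      ((n : ℝ) - 2 - 2 * k) / (n + 2) := by
    rw [div_eq_div_iff (by positivity) (by positivity)]; ring
  simp only [bhalf, bbinom_eq_gammaBinom]
  push_cast
  rw [← hcoef, mul_add, mul_add, show (1 / 2 : ℝ) * 2 = 1 by norm_num]
  exact key

theorem bhalf_difference (n : ℕ) (k : ℤ) (hk : -1 ≤ k) :
    bhalf n (k + 2) - bhalf n k =
      (((n : ℝ) - 2 - 2 * (k : ℝ)) / ((n : ℝ) + 2)) * bhalf (n + 2) (k + 2) :=
  bhalf_difference_general n k
end

section
/- Pascal's rule for 1/2-binomials: for every natural number n and every integer k ≥ −1, one has [n k] + [n (k+2)] = [(n+2) (k+2)]. -/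
open scoped Real Classical

lemma aux_alg (a b A P Q : ℝ) (ha : a ≠ 0) (hb : b ≠ 0) (hP : P ≠ 0) (hQ : Q ≠ 0) :
    A/(P*(b*Q)) + A/((a*P)*Q) = (a+b)*A/((a*P)*(b*Q)) := by
  field_simp

lemma gamma_pascal (u v : ℝ) (hu : 0 < u/2 + 1) (hv0 : v/2 ≠ 0) (hgv : Real.Gamma (v/2) ≠ 0)
    (hab : (u+v)/2 + 1 ≠ 0) :
    Real.Gamma ((u+v)/2+1)/(Real.Gamma (u/2+1) * Real.Gamma (v/2+1)) +
      Real.Gamma ((u+v)/2+1)/(Real.Gamma (u/2+2) * Real.Gamma (v/2)) =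
      Real.Gamma ((u+v)/2+2)/(Real.Gamma (u/2+2) * Real.Gamma (v/2+1)) := by
  have h1 : Real.Gamma (u/2+2) = (u/2+1) * Real.Gamma (u/2+1) := by
    rw [show u/2+2 = (u/2+1)+1 by ring, Real.Gamma_add_one hu.ne']
  have h2 : Real.Gamma (v/2+1) = (v/2) * Real.Gamma (v/2) := Real.Gamma_add_one hv0
  have h3 : Real.Gamma ((u+v)/2+2) = ((u+v)/2+1) * Real.Gamma ((u+v)/2+1) := by
    rw [show (u+v)/2+2 = ((u+v)/2+1)+1 by ring, Real.Gamma_add_one hab]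
  have hga : Real.Gamma (u/2+1) ≠ 0 := (Real.Gamma_pos_of_pos hu).ne'
  rw [h1, h2, h3, show (u+v)/2+1 = (u/2+1) + v/2 by ring]
  exact aux_alg _ _ _ _ _ hu.ne' hv0 hga hgv

theorem bhalf_pascal (n : ℕ) (k : ℤ) (hk : -1 ≤ k) :
    bhalf n k + bhalf n (k + 2) = bhalf (n + 2) (k + 2) := by
  have hkr : (-1:ℝ) ≤ (k:ℝ) := by exact_mod_cast hk
  have hn0 : (0:ℝ) ≤ (n:ℝ) := n.cast_nonneg
  simp only [bhalf, bbinom]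
  have key : ∀ (hv0 : ((n:ℝ)-(k:ℝ))/2 ≠ 0) (hgv : Real.Gamma (((n:ℝ)-(k:ℝ))/2) ≠ 0),
      Real.Gamma ((1/2:ℝ) * n + 1) /
        (Real.Gamma ((1/2:ℝ) * k + 1) * Real.Gamma ((1/2:ℝ) * ((n:ℝ) - (k:ℝ)) + 1)) +
      Real.Gamma ((1/2:ℝ) * n + 1) /
        (Real.Gamma ((1/2:ℝ) * ((k+2:ℤ):ℝ) + 1) *
          Real.Gamma ((1/2:ℝ) * ((n:ℝ) - ((k+2:ℤ):ℝ)) + 1)) =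
      Real.Gamma ((1/2:ℝ) * ((n+2:ℕ):ℝ) + 1) /
        (Real.Gamma ((1/2:ℝ) * ((k+2:ℤ):ℝ) + 1) *
          Real.Gamma ((1/2:ℝ) * (((n+2:ℕ):ℝ) - ((k+2:ℤ):ℝ)) + 1)) := by
    intro hv0 hgv
    have := gamma_pascal (k:ℝ) ((n:ℝ)-(k:ℝ)) (by linarith) hv0 hgv
      (by have : ((k:ℝ) + ((n:ℝ)-(k:ℝ)))/2 + 1 = (n:ℝ)/2 + 1 := by ring
          rw [this]; positivity)
    push_cast
    ring_nf at this ⊢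
    linarith [this]
  by_cases hpar : (2:ℤ) ∣ ((n:ℤ) - k)
  · obtain ⟨m, hm⟩ := hpar
    have hr : (n:ℝ) - (k:ℝ) = 2*(m:ℝ) := by exact_mod_cast congrArg (fun z : ℤ => (z : ℝ)) hm
    rcases lt_trichotomy m 0 with h | h | h
    · rw [if_pos ⟨m, by omega, by linarith⟩,
          if_pos ⟨m-1, by omega, by push_cast; linarith⟩,
          if_pos ⟨m, by omega, by push_cast; linarith⟩]
      norm_num
    · subst h
      norm_num at hr
      have hne1 : ¬ ∃ mm : ℤ, mm ≤ -1 ∧ (1/2:ℝ) * ((n:ℝ) - (k:ℝ)) = (mm:ℝ) := by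
        rintro ⟨mm, hmm, hh⟩
        have h0 : (mm:ℝ) = 0 := by linarith
        have : mm = 0 := by exact_mod_cast h0
        omega
      have hne3 : ¬ ∃ mm : ℤ, mm ≤ -1 ∧
          (1/2:ℝ) * (((n+2:ℕ):ℝ) - ((k+2:ℤ):ℝ)) = (mm:ℝ) := by
        rintro ⟨mm, hmm, hh⟩
        push_cast at hh
        have h0 : (mm:ℝ) = 0 := by linarith
        have : mm = 0 := by exact_mod_cast h0
        omega
      rw [if_neg hne1, if_pos ⟨-1, le_refl _, by push_cast; linarith⟩, if_neg hne3]
      have hk' : (k:ℝ) = (n:ℝ) := by linarith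
      push_cast
      rw [hk']
      have g1 : Real.Gamma ((1/2:ℝ) * ((n:ℝ) - (n:ℝ)) + 1) = 1 := by
        norm_num [Real.Gamma_one]
      have g3 : Real.Gamma ((1/2:ℝ) * ((n:ℝ) + 2 - ((n:ℝ) + 2)) + 1) = 1 := by
        norm_num [Real.Gamma_one]
      rw [g1, g3]
      have hA : Real.Gamma ((1/2:ℝ) * n + 1) ≠ 0 :=
        (Real.Gamma_pos_of_pos (by positivity)).ne'
      have hB : Real.Gamma ((1/2:ℝ) * ((n:ℝ) + 2) + 1) ≠ 0 :=
        (Real.Gamma_pos_of_pos (by positivity)).ne'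
      rw [mul_one, mul_one, div_self hA, div_self hB]
      norm_num
    · have hne1 : ¬ ∃ mm : ℤ, mm ≤ -1 ∧ (1/2:ℝ) * ((n:ℝ) - (k:ℝ)) = (mm:ℝ) := by
        rintro ⟨mm, hmm, hh⟩
        have h0 : (mm:ℝ) = (m:ℝ) := by linarith
        have : mm = m := by exact_mod_cast h0
        omega
      have hne2 : ¬ ∃ mm : ℤ, mm ≤ -1 ∧ (1/2:ℝ) * ((n:ℝ) - ((k+2:ℤ):ℝ)) = (mm:ℝ) := by
        rintro ⟨mm, hmm, hh⟩
        push_cast at hh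
        have h0 : (mm:ℝ) = (m:ℝ) - 1 := by linarith
        have : mm = m - 1 := by exact_mod_cast h0
        omega
      have hne3 : ¬ ∃ mm : ℤ, mm ≤ -1 ∧
          (1/2:ℝ) * (((n+2:ℕ):ℝ) - ((k+2:ℤ):ℝ)) = (mm:ℝ) := by
        rintro ⟨mm, hmm, hh⟩
        push_cast at hh
        have h0 : (mm:ℝ) = (m:ℝ) := by linarith
        have : mm = m := by exact_mod_cast h0
        omega
      rw [if_neg hne1, if_neg hne2, if_neg hne3]
      have hm1 : (1:ℝ) ≤ (m:ℝ) := by exact_mod_cast h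
      refine key ?_ ?_
      · rw [hr]; intro hc; norm_num at hc; linarith
      · rw [hr, show (2*(m:ℝ))/2 = (m:ℝ) by ring]
        exact (Real.Gamma_pos_of_pos (by linarith)).ne'
  · have hodd : ∀ mm : ℤ, (n:ℤ) - k ≠ 2 * mm := by
      intro mm hc
      exact hpar ⟨mm, hc⟩
    have hne1 : ¬ ∃ mm : ℤ, mm ≤ -1 ∧ (1/2:ℝ) * ((n:ℝ) - (k:ℝ)) = (mm:ℝ) := by
      rintro ⟨mm, hmm, hh⟩
      have : ((n:ℤ) - k : ℝ) = ((2*mm : ℤ):ℝ) := by push_cast; linarith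
      exact hodd mm (by exact_mod_cast this)
    have hne2 : ¬ ∃ mm : ℤ, mm ≤ -1 ∧ (1/2:ℝ) * ((n:ℝ) - ((k+2:ℤ):ℝ)) = (mm:ℝ) := by
      rintro ⟨mm, hmm, hh⟩
      push_cast at hh
      have : ((n:ℤ) - k : ℝ) = ((2*(mm+1) : ℤ):ℝ) := by push_cast; linarith
      exact hodd (mm+1) (by exact_mod_cast this)
    have hne3 : ¬ ∃ mm : ℤ, mm ≤ -1 ∧
        (1/2:ℝ) * (((n+2:ℕ):ℝ) - ((k+2:ℤ):ℝ)) = (mm:ℝ) := by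
      rintro ⟨mm, hmm, hh⟩
      push_cast at hh
      have : ((n:ℤ) - k : ℝ) = ((2*mm : ℤ):ℝ) := by push_cast; linarith
      exact hodd mm (by exact_mod_cast this)
    rw [if_neg hne1, if_neg hne2, if_neg hne3]
    refine key ?_ ?_
    · intro hc
      have : ((n:ℤ) - k : ℝ) = ((2*0 : ℤ):ℝ) := by push_cast; linarith
      exact hodd 0 (by exact_mod_cast this)
    · refine Real.Gamma_ne_zero fun mm => ?_
      intro hc
      have : ((n:ℤ) - k : ℝ) = ((2*(-(mm:ℤ)) : ℤ):ℝ) := by push_cast; linarith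
      exact hodd (-(mm:ℤ)) (by exact_mod_cast this)
end

section
/- For every real t with −1 ≤ t ≤ 1, the series ∑_{k=0}^∞ [1 k] t^k converges and equals t + √(1 + t²). -/
open scoped Real Classical

/-!
The even coefficients are `[1 2j] = C(1/2, j)`, while among the odd ones only `[1 1] = 1` is
nonzero, so the series is `t + ∑ C(1/2, j) t^(2j)`. For `|x| ≤ 1` the binomial series
`S = ∑ C(1/2, j) x^j` converges absolutely, since for `0 < a ≤ 1` the quantity `a |C(a, j + 1)|`
telescopes. By Chu–Vandermonde the Cauchy square of `S` is `∑ C(1, j) x^j = 1 + x`, and `S ≥ 0`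
because the terms after the first have absolute sum at most `1`; hence `S = √(1 + x)`.
-/

open Finset Polynomial

theorem Ring.natCast_add_one_mul_choose_add_one {K : Type*} [Field K] [CharZero K] (a : K)
    (n : ℕ) : ((n : K) + 1) * Ring.choose a (n + 1) = Ring.choose a n * (a - n) := by
  simp only [Ring.choose_eq_smul, smul_eq_mul, descPochhammer_succ_right, smeval_mul]
  simp [smeval_natCast, Nat.factorial_succ]
  field_simp

theorem Real.Gamma_div_Gamma_mul_Gamma_eq_choose (a : ℝ) (n : ℕ)
    (ha : ∀ m : ℕ, a - n + 1 ≠ -m) :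
    Gamma (a + 1) / (Gamma (n + 1) * Gamma (a - n + 1)) = Ring.choose a n := by
  induction n with
  | zero =>
    have : Gamma (a + 1) ≠ 0 := Gamma_ne_zero fun m hm => ha m (by simpa using hm)
    simp [this]
  | succ n ih =>
    simp only [Nat.cast_add_one, sub_add_eq_sub_sub, sub_add_cancel] at ha ⊢
    have hΓ : Gamma (a - n) ≠ 0 := Gamma_ne_zero ha
    have hsub : a - n ≠ 0 := by simpa using ha 0
    have hn : (n : ℝ) + 1 ≠ 0 := by positivity
    have hΓn : Gamma (n + 1) ≠ 0 := (Gamma_pos_of_pos (by positivity)).ne'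
    rw [← mul_right_inj' hn, Ring.natCast_add_one_mul_choose_add_one,
      ← ih fun m hm => ha (m + 1) (by push_cast; linarith), Gamma_add_one hn,
      Gamma_add_one hsub]
    field_simp

theorem bhalf_self (n : ℕ) : bhalf n n = 1 := by
  have : Real.Gamma (2⁻¹ * n + 1) ≠ 0 := (Real.Gamma_pos_of_pos (by positivity)).ne'
  simp [bhalf, bbinom, this, eq_comm (a := (0 : ℝ))]

theorem bhalf_add_two_mul_add_two (n j : ℕ) : bhalf n (n + 2 * (j + 1) : ℕ) = 0 := by
  rw [bhalf, bbinom, if_pos]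
  exact ⟨-(j + 1), by omega, by push_cast; ring⟩

theorem bhalf_two_mul {n : ℕ} (hn : Odd n) (j : ℕ) :
    bhalf n (2 * j : ℕ) = Ring.choose ((n : ℝ) / 2) j := by
  obtain ⟨i, rfl⟩ := hn
  rw [bhalf, bbinom, if_neg, ← Real.Gamma_div_Gamma_mul_Gamma_eq_choose]
  · congr 3 <;> push_cast <;> ring
  · intro m hm
    have : (2 * (i - j + m : ℤ) : ℝ) = -3 := by push_cast at hm ⊢; linarith
    have : 2 * (i - j + m : ℤ) = -3 := by exact_mod_cast this
    omega
  · rintro ⟨m, -, hm⟩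
    have : (2 * (m + j - i : ℤ) : ℝ) = 1 := by push_cast at hm ⊢; linarith
    have : 2 * (m + j - i : ℤ) = 1 := by exact_mod_cast this
    omega

theorem Real.sum_range_abs_choose_add_one_le {a : ℝ} (ha₀ : 0 < a) (ha₁ : a ≤ 1) (N : ℕ) :
    ∑ j ∈ range N, |Ring.choose a (j + 1)| ≤ 1 := by
  set d : ℕ → ℝ := fun j => (j + 1) * |Ring.choose a (j + 1)|
  -- `(j + 2) |C(a, j + 2)| = (j + 1 - a) |C(a, j + 1)|`, so `a |C(a, j + 1)|` telescopes.
  have step : ∀ j, a * |Ring.choose a (j + 1)| = d j - d (j + 1) := by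
    intro j
    have h := congrArg abs (Ring.natCast_add_one_mul_choose_add_one a (j + 1))
    rw [abs_mul, abs_mul, abs_of_nonneg (a := ((j + 1 : ℕ) : ℝ) + 1) (by positivity),
      abs_of_nonpos (a := a - ((j + 1 : ℕ) : ℝ)) (by push_cast; linarith)] at h
    simp only [d]
    push_cast at h ⊢
    linarith
  have : a * ∑ j ∈ range N, |Ring.choose a (j + 1)| ≤ a * 1 := by
    rw [mul_sum, sum_congr rfl fun j _ => step j, sum_range_sub']
    simp [d, abs_of_pos ha₀]
    positivity
  exact le_of_mul_le_mul_left this ha₀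

theorem Real.summable_abs_choose {a : ℝ} (ha₀ : 0 < a) (ha₁ : a ≤ 1) :
    Summable fun j => |Ring.choose a j| :=
  (summable_nat_add_iff 1).mp <|
    summable_of_sum_range_le (fun _ => abs_nonneg _) (sum_range_abs_choose_add_one_le ha₀ ha₁)

theorem Real.tsum_abs_choose_add_one_le {a : ℝ} (ha₀ : 0 < a) (ha₁ : a ≤ 1) :
    ∑' j, |Ring.choose a (j + 1)| ≤ 1 :=
  Real.tsum_le_of_sum_range_le (fun _ => abs_nonneg _) (sum_range_abs_choose_add_one_le ha₀ ha₁)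

theorem Real.tsum_choose_mul_pow_mul_tsum_choose_mul_pow {a b x : ℝ}
    (ha : Summable fun j => ‖Ring.choose a j * x ^ j‖)
    (hb : Summable fun j => ‖Ring.choose b j * x ^ j‖) :
    (∑' j, Ring.choose a j * x ^ j) * (∑' j, Ring.choose b j * x ^ j) =
      ∑' j, Ring.choose (a + b) j * x ^ j := by
  rw [tsum_mul_tsum_eq_tsum_sum_antidiagonal_of_summable_norm ha hb]
  refine tsum_congr fun n => ?_
  rw [Ring.add_choose_eq n (Commute.all a b), sum_mul]
  refine sum_congr rfl fun ij hij => ?_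
  rw [← mem_antidiagonal.mp hij, pow_add]
  ring

theorem Real.tsum_choose_one_mul_pow (x : ℝ) : ∑' j, Ring.choose (1 : ℝ) j * x ^ j = 1 + x := by
  have hchoose (j : ℕ) : Ring.choose (1 : ℝ) j = Nat.choose 1 j := by
    simpa using Ring.choose_natCast (R := ℝ) 1 j
  rw [tsum_eq_sum (s := range 2) fun j hj => by
    simp [hchoose, Nat.choose_eq_zero_of_lt (not_lt.mp (mem_range.not.mp hj))]]
  simp [sum_range_succ, hchoose]

theorem Real.hasSum_choose_half_mul_pow {x : ℝ} (hx : |x| ≤ 1) :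
    HasSum (fun j => Ring.choose (1 / 2 : ℝ) j * x ^ j) (√(1 + x)) := by
  have hbound (j : ℕ) : ‖Ring.choose (1 / 2 : ℝ) j * x ^ j‖ ≤ |Ring.choose (1 / 2 : ℝ) j| := by
    rw [norm_mul, norm_pow]
    exact mul_le_of_le_one_right (norm_nonneg _) (pow_le_one₀ (norm_nonneg _) hx)
  have habs : Summable fun j => ‖Ring.choose (1 / 2 : ℝ) j * x ^ j‖ :=
    (summable_abs_choose (by norm_num) (by norm_num)).of_nonneg_of_le (fun _ => norm_nonneg _)
      hbound
  have hsum := habs.of_norm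
  have htail : |∑' j, Ring.choose (1 / 2 : ℝ) (j + 1) * x ^ (j + 1)| ≤ 1 :=
    (tsum_of_norm_bounded
      ((summable_nat_add_iff 1).mpr (summable_abs_choose (by norm_num) (by norm_num))).hasSum
      fun j => hbound (j + 1)).trans (tsum_abs_choose_add_one_le (by norm_num) (by norm_num))
  have hnonneg : 0 ≤ ∑' j, Ring.choose (1 / 2 : ℝ) j * x ^ j := by
    rw [hsum.tsum_eq_zero_add]
    simp only [Ring.choose_zero_right, pow_zero, mul_one]
    linarith [(abs_le.mp htail).1]
  have hsqrt : √(1 + x) = ∑' j, Ring.choose (1 / 2 : ℝ) j * x ^ j := by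
    rw [Real.sqrt_eq_iff_mul_self_eq (by linarith [(abs_le.mp hx).1]) hnonneg,
      tsum_choose_mul_pow_mul_tsum_choose_mul_pow habs habs, add_halves, tsum_choose_one_mul_pow]
  rw [hsqrt]
  exact hsum.hasSum

theorem bhalf_genfun_one (t : ℝ) (ht1 : -1 ≤ t) (ht2 : t ≤ 1) :
    HasSum (fun k : ℕ => bhalf 1 (k : ℤ) * t ^ k) (t + Real.sqrt (1 + t ^ 2)) := by
  rw [add_comm]
  refine HasSum.even_add_odd ?_ ?_
  · have ht : |t ^ 2| ≤ 1 := by rw [abs_sq]; nlinarith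
    convert Real.hasSum_choose_half_mul_pow ht using 2 with j
    rw [bhalf_two_mul odd_one, pow_mul]
    norm_num
  · convert hasSum_ite_eq 0 t with j
    rcases j with _ | j
    · have h : bhalf 1 1 = 1 := by exact_mod_cast bhalf_self 1
      simp [h]
    · rw [show 2 * (j + 1) + 1 = 1 + 2 * (j + 1) by ring, bhalf_add_two_mul_add_two]
      simp
end

section
/- Even partial-sum identity: for every natural number n, ∑_{k=0}^{2n} [(2n) k] = 2^n · (1 + (2/π)·∑_{k=1}^{n} 2^k/(k·C(2k,k))), where C(2k,k) is the central binomial coefficient. -/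
open scoped Real Classical

/-!
Split the sum by the parity of `k`. The even terms are `[2n, 2j] = C(n, j)`, which sum to `2^n`.
The odd terms `[2n, 2j+1] = Γ(n+1) / (Γ(j+3/2) Γ(n-j+1/2))` are hypergeometric in `(n, j)`, and
creative telescoping shows that their sum `S n` satisfies
`(2n+3) S(n+2) - (6n+8) S(n+1) + (4n+4) S(n) = 0`.
The claim reduces to `π S n = T n := 2^(n+1) ∑_{k ≤ n} 2^k / (k C(2k, k))`, and `T` satisfies
the first-order inhomogeneous recurrence `T(n+1) = 2 T(n) + 2^(2n+3) / ((n+1) C(2n+2, n+1))`;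
eliminating the inhomogeneous term via `(n+2) C(2n+4, n+2) = 2 (2n+3) C(2n+2, n+1)` gives the
same second-order recurrence, and `π S` and `T` agree at `n = 0, 1`.
-/

open Finset Real

theorem Finset.sum_range_two_mul_add_one {M : Type*} [AddCommMonoid M] (f : ℕ → M) (n : ℕ) :
    ∑ k ∈ range (2 * n + 1), f k =
      ∑ j ∈ range (n + 1), f (2 * j) + ∑ j ∈ range n, f (2 * j + 1) := by
  induction n with
  | zero => simp
  | succ n ih =>
    rw [show 2 * (n + 1) + 1 = 2 * n + 1 + 1 + 1 by ring, sum_range_succ, sum_range_succ, ih,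
      sum_range_succ (fun j ↦ f (2 * j)) (n + 1), sum_range_succ (fun j ↦ f (2 * j + 1)) n,
      show 2 * (n + 1) = 2 * n + 1 + 1 by ring]
    abel

theorem eq_of_linear_recurrence_two {R : Type*} [CommRing R] [NoZeroDivisors R]
    {a b c u v : ℕ → R} (ha : ∀ n, a n ≠ 0)
    (hu : ∀ n, a n * u (n + 2) + b n * u (n + 1) + c n * u n = 0)
    (hv : ∀ n, a n * v (n + 2) + b n * v (n + 1) + c n * v n = 0)
    (h0 : u 0 = v 0) (h1 : u 1 = v 1) (n : ℕ) : u n = v n := by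
  induction n using Nat.twoStepInduction with
  | zero => exact h0
  | one => exact h1
  | more n ih₀ ih₁ =>
    have h : a n * (u (n + 2) - v (n + 2)) = 0 := by
      linear_combination hu n - hv n - b n * ih₁ - c n * ih₀
    exact sub_eq_zero.1 ((mul_eq_zero.1 h).resolve_left (ha n))

lemma bhalf_two_mul_two_mul {n j : ℕ} (h : j ≤ n) :
    bhalf (2 * n) ((2 * j : ℕ) : ℤ) = n.choose j := by
  have hjn : (j : ℝ) ≤ n := by exact_mod_cast h
  rw [bhalf, bbinom, if_neg]
  · have hsub : (1 / 2 : ℝ) * ((2 * n : ℕ) - ((2 * j : ℕ) : ℤ)) + 1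
        = (n - j : ℕ) + 1 := by
      push_cast [Nat.cast_sub h]; ring
    rw [hsub, show (1 / 2 : ℝ) * (2 * n : ℕ) + 1 = n + 1 by push_cast; ring,
      show (1 / 2 : ℝ) * ((2 * j : ℕ) : ℤ) + 1 = j + 1 by push_cast; ring,
      Gamma_nat_eq_factorial, Gamma_nat_eq_factorial, Gamma_nat_eq_factorial,
      Nat.cast_choose ℝ h]
  · rintro ⟨m, hm, he⟩
    have hm' : (m : ℝ) ≤ -1 := by exact_mod_cast hm
    push_cast at he
    linarith

noncomputable def oddTerm (j m : ℕ) : ℝ :=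
  Gamma (j + m + 1) / (Gamma (j + 3 / 2) * Gamma (m + 1 / 2))

lemma bhalf_two_mul_add_one (j m : ℕ) :
    bhalf (2 * (j + m)) ((2 * j + 1 : ℕ) : ℤ) = oddTerm j m := by
  rw [bhalf, bbinom, if_neg]
  · push_cast
    rw [oddTerm]
    congr 3 <;> ring
  · rintro ⟨k, hk, he⟩
    have hk' : (k : ℝ) ≤ -1 := by exact_mod_cast hk
    push_cast at he
    linarith [(m.cast_nonneg : (0 : ℝ) ≤ m)]

lemma oddTerm_succ_right (j m : ℕ) :
    oddTerm j (m + 1) = 2 * (j + m + 1) / (2 * m + 1) * oddTerm j m := by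
  have hΓj : Gamma (j + 3 / 2) ≠ 0 := (Gamma_pos_of_pos (by positivity)).ne'
  have hΓm : Gamma (m + 1 / 2) ≠ 0 := (Gamma_pos_of_pos (by positivity)).ne'
  have hn : Gamma (j + m + 1 + 1) = (j + m + 1) * Gamma (j + m + 1) :=
    Gamma_add_one (by positivity)
  have hm : Gamma (m + 1 / 2 + 1) = (m + 1 / 2) * Gamma (m + 1 / 2) :=
    Gamma_add_one (by positivity)
  rw [oddTerm, oddTerm, Nat.cast_succ, show (j : ℝ) + (m + 1) + 1 = j + m + 1 + 1 by ring,
    show (m : ℝ) + 1 + 1 / 2 = m + 1 / 2 + 1 by ring, hn, hm]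
  field_simp

lemma oddTerm_succ_left (j m : ℕ) :
    oddTerm (j + 1) m = 2 * (j + m + 1) / (2 * j + 3) * oddTerm j m := by
  have hΓj : Gamma (j + 3 / 2) ≠ 0 := (Gamma_pos_of_pos (by positivity)).ne'
  have hΓm : Gamma (m + 1 / 2) ≠ 0 := (Gamma_pos_of_pos (by positivity)).ne'
  have hn : Gamma (j + m + 1 + 1) = (j + m + 1) * Gamma (j + m + 1) :=
    Gamma_add_one (by positivity)
  have hj : Gamma (j + 3 / 2 + 1) = (j + 3 / 2) * Gamma (j + 3 / 2) :=
    Gamma_add_one (by positivity)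
  rw [oddTerm, oddTerm, Nat.cast_succ, show (j : ℝ) + 1 + m + 1 = j + m + 1 + 1 by ring,
    show (j : ℝ) + 1 + 3 / 2 = j + 3 / 2 + 1 by ring, hn, hj]
  field_simp

lemma oddTerm_zero_one : oddTerm 0 1 = 4 / π := by
  have h : Gamma (3 / 2) = √π / 2 := by
    rw [show (3 / 2 : ℝ) = 1 / 2 + 1 by norm_num, Gamma_add_one (by norm_num), Gamma_one_half_eq]
    ring
  have hπ : √π ≠ 0 := (sqrt_pos.2 pi_pos).ne'
  rw [oddTerm_succ_right, oddTerm]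
  norm_num [h, Gamma_one_half_eq]
  field_simp
  rw [sq_sqrt pi_pos.le]
  ring

-- Zeilberger's certificate for the recurrence of `oddSum`, found by creative telescoping.
noncomputable def oddCert (j m : ℕ) : ℝ :=
  -4 * j * (2 * j + 1) * (j + m + 1) / ((2 * m + 1) * (2 * m + 3)) * oddTerm j m

lemma oddTerm_telescope (j m : ℕ) :
    (2 * (j + m + 1) + 3) * oddTerm j (m + 3) - (6 * (j + m + 1) + 8) * oddTerm j (m + 2)
      + (4 * (j + m + 1) + 4) * oddTerm j (m + 1) = oddCert (j + 1) m - oddCert j (m + 1) := by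
  simp only [oddCert, oddTerm_succ_right, oddTerm_succ_left]
  push_cast
  field_simp
  ring

lemma oddTerm_telescope_boundary (n : ℕ) :
    oddCert n 0 + (2 * n + 3) * (oddTerm n 2 + oddTerm (n + 1) 1) - (6 * n + 8) * oddTerm n 1
      = 0 := by
  simp only [oddCert, oddTerm_succ_right, oddTerm_succ_left]
  push_cast
  field_simp
  ring

noncomputable def oddSum (n : ℕ) : ℝ := ∑ j ∈ range n, oddTerm j (n - j)

lemma oddSum_recurrence (n : ℕ) :
    (2 * n + 3) * oddSum (n + 2) - (6 * n + 8) * oddSum (n + 1) + (4 * n + 4) * oddSum n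
      = 0 := by
  have hterm : ∀ j ∈ range n,
      (2 * n + 3) * oddTerm j (n + 2 - j) - (6 * n + 8) * oddTerm j (n + 1 - j)
        + (4 * n + 4) * oddTerm j (n - j)
        = oddCert (j + 1) (n - (j + 1)) - oddCert j (n - j) := by
    intro j hj
    obtain ⟨m, rfl⟩ : ∃ m, n = j + m + 1 := ⟨n - j - 1, by grind⟩
    rw [show j + m + 1 + 2 - j = m + 3 by omega, show j + m + 1 + 1 - j = m + 2 by omega,
      show j + m + 1 - j = m + 1 by omega, show j + m + 1 - (j + 1) = m by omega]
    push_cast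
    linear_combination oddTerm_telescope j m
  have hsum := sum_congr rfl hterm
  rw [sum_range_sub (fun j ↦ oddCert j (n - j)), sum_add_distrib, sum_sub_distrib, ← mul_sum,
    ← mul_sum, ← mul_sum] at hsum
  have hcert0 : oddCert 0 (n - 0) = 0 := by simp [oddCert]
  rw [hcert0] at hsum
  simp only [oddSum, sum_range_succ, Nat.sub_self,
    show n + 2 - n = 2 by omega, show n + 2 - (n + 1) = 1 by omega,
    show n + 1 - n = 1 by omega] at hsum ⊢
  linear_combination hsum + oddTerm_telescope_boundary n

noncomputable def oddSumClosed (n : ℕ) : ℝ :=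
  2 ^ (n + 1) * ∑ k ∈ Icc 1 n, (2 : ℝ) ^ k / (k * (2 * k).choose k)

lemma oddSumClosed_succ (n : ℕ) :
    oddSumClosed (n + 1) =
      2 * oddSumClosed n + 2 ^ (2 * n + 3) / ((n + 1) * (n + 1).centralBinom) := by
  rw [oddSumClosed, oddSumClosed, sum_Icc_succ_top (by omega),
    ← Nat.centralBinom_eq_two_mul_choose]
  have hc : ((n + 1).centralBinom : ℝ) ≠ 0 := by exact_mod_cast (Nat.centralBinom_pos _).ne'
  push_cast
  field_simp
  ring

lemma oddSumClosed_recurrence (n : ℕ) :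
    (2 * n + 3) * oddSumClosed (n + 2) - (6 * n + 8) * oddSumClosed (n + 1)
      + (4 * n + 4) * oddSumClosed n = 0 := by
  have hcb : ((n + 2 : ℕ) : ℝ) * (n + 2).centralBinom
      = 2 * (2 * (n + 1) + 1) * (n + 1).centralBinom := by
    exact_mod_cast Nat.succ_mul_centralBinom_succ (n + 1)
  have hc : ((n + 1).centralBinom : ℝ) ≠ 0 := by exact_mod_cast (Nat.centralBinom_pos _).ne'
  have h₁ := oddSumClosed_succ (n + 1)
  have h₀ := oddSumClosed_succ n
  push_cast at h₁ hcb
  rw [show ((n : ℝ) + 1 + 1) * (n + 2).centralBinom = (n + 2) * (n + 2).centralBinom by ring,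
    hcb] at h₁
  rw [h₁, h₀]
  field_simp
  ring

lemma pi_mul_oddSum (n : ℕ) : π * oddSum n = oddSumClosed n := by
  refine eq_of_linear_recurrence_two (u := fun n ↦ π * oddSum n) (v := oddSumClosed)
    (a := fun n : ℕ ↦ 2 * (n : ℝ) + 3)
    (b := fun n : ℕ ↦ -(6 * (n : ℝ) + 8)) (c := fun n : ℕ ↦ 4 * (n : ℝ) + 4)
    (fun n ↦ by positivity) (fun n ↦ ?_) (fun n ↦ ?_) ?_ ?_ n
  · linear_combination π * oddSum_recurrence n
  · linear_combination oddSumClosed_recurrence n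
  · simp [oddSum, oddSumClosed]
  · norm_num [oddSum, oddSumClosed, oddTerm_zero_one, mul_div_cancel₀ _ pi_ne_zero]

theorem bhalf_even_partial_sum (n : ℕ) :
    ∑ k ∈ Finset.range (2 * n + 1), bhalf (2 * n) (k : ℤ) =
      2 ^ n * (1 + (2 / π) * ∑ k ∈ Finset.Icc 1 n,
        (2 : ℝ) ^ k / ((k : ℝ) * (Nat.choose (2 * k) k : ℝ))) := by
  have heven : ∑ j ∈ range (n + 1), bhalf (2 * n) ((2 * j : ℕ) : ℤ) = 2 ^ n := by
    rw [sum_congr rfl fun j hj ↦ bhalf_two_mul_two_mul (Nat.lt_succ_iff.1 (mem_range.1 hj))]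
    exact_mod_cast Nat.sum_range_choose n
  have hodd : ∑ j ∈ range n, bhalf (2 * n) ((2 * j + 1 : ℕ) : ℤ) = oddSum n := by
    refine sum_congr rfl fun j hj ↦ ?_
    rw [← bhalf_two_mul_add_one, Nat.add_sub_cancel' (mem_range.1 hj).le]
  rw [sum_range_two_mul_add_one (fun k ↦ bhalf (2 * n) (k : ℤ)), heven, hodd]
  have hπ := pi_mul_oddSum n
  rw [oddSumClosed] at hπ
  field_simp
  linear_combination hπ
end
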